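/- Let k ≥ 0 and let K = (0,1)² be the unit square. Set E := {(v₁, v₂) : v₁ ∈ 𝒬_k + y^{k+1}·𝒫_k(x), v₂ ∈ 𝒬_k + x^{k+1}·𝒫_k(y)}. For every edge e of K with affine parametrization γ_e : [0,1] → e and unit tangent vector t_e: (i) the trace space {p ∘ γ_e : p ∈ 𝒬_{k+1}} equals the space of univariate polynomials of degree at most k+1 in the parameter; and (ii) the tangential trace space {(v · t_e) ∘ γ_e : v ∈ E} equals the space of univariate polynomials of degree at most k in the parameter. -/

import Mathlib

open MvPolynomial

/-- Polynomials on `ℝ²`. -/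
abbrev R2 := MvPolynomial (Fin 2) ℝ

/-- Membership in `𝒬_m`: degree at most `m` in each variable separately. -/
def memQ2 (m : ℕ) (p : R2) : Prop := p.degreeOf 0 ≤ m ∧ p.degreeOf 1 ≤ m

/-- Membership in the Raviart–Thomas-type space
`E = {(v₁,v₂) : v₁ ∈ 𝒬_k + y^{k+1}·𝒫_k(x), v₂ ∈ 𝒬_k + x^{k+1}·𝒫_k(y)}`. -/
def memRT2 (k : ℕ) (v : R2 × R2) : Prop :=
  (∃ q f : R2, memQ2 k q ∧ f.degreeOf 0 ≤ k ∧ f.degreeOf 1 = 0 ∧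
      v.1 = q + X 1 ^ (k + 1) * f) ∧
  (∃ q f : R2, memQ2 k q ∧ f.degreeOf 1 ≤ k ∧ f.degreeOf 0 = 0 ∧
      v.2 = q + X 0 ^ (k + 1) * f)

/-- Affine parametrization `γ(t) = (1−t)·A + t·B` of the segment `[A,B]`,
written as a point of `ℝ²` in `Fin 2 → ℝ` form. -/
def param (A B : ℝ × ℝ) (t : ℝ) : Fin 2 → ℝ :=
  ![(1 - t) * A.1 + t * B.1, (1 - t) * A.2 + t * B.2]

/-- The unit tangent vector `t_e = (B − A)/|B − A|` of the segment `[A,B]`. -/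
noncomputable def tangent (A B : ℝ × ℝ) : ℝ × ℝ :=
  ((B.1 - A.1) / Real.sqrt ((B.1 - A.1) ^ 2 + (B.2 - A.2) ^ 2),
   (B.2 - A.2) / Real.sqrt ((B.1 - A.1) ^ 2 + (B.2 - A.2) ^ 2))

/-- The (ordered) pairs of endpoints of the four edges of the unit square. -/
def squareEdges : Set ((ℝ × ℝ) × (ℝ × ℝ)) :=
  {(((0 : ℝ), (0 : ℝ)), ((1 : ℝ), (0 : ℝ))), (((1 : ℝ), (0 : ℝ)), ((1 : ℝ), (1 : ℝ))),
   (((1 : ℝ), (1 : ℝ)), ((0 : ℝ), (1 : ℝ))), (((0 : ℝ), (1 : ℝ)), ((0 : ℝ), (0 : ℝ)))}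

lemma natDegree_mvEval₂_le (p : R2) (g : Fin 2 → Polynomial ℝ) (i : Fin 2)
    (hgi : (g i).natDegree ≤ 1) (hgo : ∀ j, j ≠ i → (g j).natDegree = 0) :
    (MvPolynomial.eval₂ Polynomial.C g p).natDegree ≤ p.degreeOf i := by
  rw [MvPolynomial.eval₂_eq']
  apply Polynomial.natDegree_sum_le_of_forall_le
  intro d hd
  refine (Polynomial.natDegree_C_mul_le _ _).trans ?_
  refine (Polynomial.natDegree_prod_le _ _).trans ?_
  have : ∀ j : Fin 2, (g j ^ d j).natDegree ≤ if j = i then d i else 0 := by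
    intro j
    refine Polynomial.natDegree_pow_le.trans ?_
    by_cases hj : j = i
    · subst hj; simpa using Nat.mul_le_mul_left (d j) hgi
    · simp [hj, hgo j hj]
  refine (Finset.sum_le_sum fun j _ => this j).trans ?_
  simp only [Finset.sum_ite_eq', Finset.mem_univ, if_true]
  exact MvPolynomial.monomial_le_degreeOf i hd

lemma degreeOf_polyEval₂_le (u : Polynomial ℝ) (g : R2) (j : Fin 2) (d : ℕ)
    (hg : g.degreeOf j ≤ d) :
    (Polynomial.eval₂ MvPolynomial.C g u).degreeOf j ≤ u.natDegree * d := by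
  rw [Polynomial.eval₂_eq_sum, Polynomial.sum]
  refine (MvPolynomial.degreeOf_sum_le _ _ _).trans ?_
  refine Finset.sup_le fun n hn => ?_
  refine (MvPolynomial.degreeOf_mul_le _ _ _).trans ?_
  simp only [MvPolynomial.degreeOf_C, zero_add]
  refine (MvPolynomial.degreeOf_pow_le _ _ _).trans ?_
  exact Nat.mul_le_mul (Polynomial.le_natDegree_of_mem_supp n hn) hg

lemma polyEval_mvEval₂ (g : Fin 2 → Polynomial ℝ) (p : R2) (t : ℝ) :
    Polynomial.eval t (MvPolynomial.eval₂ Polynomial.C g p)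
      = MvPolynomial.eval (fun j => (g j).eval t) p := by
  have := MvPolynomial.eval₂_comp_left (Polynomial.evalRingHom t) Polynomial.C g p
  simp only [Polynomial.coe_evalRingHom] at this
  rw [this]
  have h1 : (Polynomial.evalRingHom t).comp Polynomial.C = RingHom.id ℝ := by
    ext x; simp
  rw [h1, MvPolynomial.eval]
  rfl

lemma mvEval_polyEval₂ (v : Fin 2 → ℝ) (g : R2) (u : Polynomial ℝ) :
    MvPolynomial.eval v (Polynomial.eval₂ MvPolynomial.C g u)
      = Polynomial.eval (MvPolynomial.eval v g) u := by
  rw [Polynomial.hom_eval₂]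
  have h1 : (MvPolynomial.eval v).comp MvPolynomial.C = RingHom.id ℝ := by
    ext x; simp
  rw [h1, Polynomial.eval]

lemma master_h (k : ℕ) (A B : ℝ × ℝ) (a s : ℝ) (g h : Polynomial ℝ)
    (hg : g.natDegree ≤ 1) (hh : h.natDegree ≤ 1)
    (hinv : ∀ t : ℝ, h.eval (g.eval t) = t)
    (hs : s * s = 1)
    (hparam : ∀ t, param A B t = ![g.eval t, a])
    (htan : tangent A B = (s, 0)) :
    ({f : ℝ → ℝ | ∃ p : R2, memQ2 (k + 1) p ∧
        f = fun t => eval (param A B t) p} =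
      {f : ℝ → ℝ | ∃ u : Polynomial ℝ, u.natDegree ≤ k + 1 ∧
        f = fun t => u.eval t}) ∧
    ({f : ℝ → ℝ | ∃ v : R2 × R2, memRT2 k v ∧
        f = fun t => eval (param A B t) v.1 * (tangent A B).1
          + eval (param A B t) v.2 * (tangent A B).2} =
      {f : ℝ → ℝ | ∃ u : Polynomial ℝ, u.natDegree ≤ k ∧
        f = fun t => u.eval t}) := by
  have hgvec : ∀ t : ℝ, (fun j : Fin 2 => (![g, Polynomial.C a] j).eval t)
      = ![g.eval t, a] := by
    intro t; funext j; fin_cases j <;> simp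
  have hΦeval : ∀ (p : R2) (t : ℝ),
      (MvPolynomial.eval₂ Polynomial.C ![g, Polynomial.C a] p).eval t
        = MvPolynomial.eval (param A B t) p := by
    intro p t
    rw [polyEval_mvEval₂, hparam, hgvec]
  have hΦdeg : ∀ (p : R2),
      (MvPolynomial.eval₂ Polynomial.C ![g, Polynomial.C a] p).natDegree
        ≤ p.degreeOf 0 := by
    intro p
    refine natDegree_mvEval₂_le p _ 0 (by simpa using hg) fun j hj => ?_
    fin_cases j
    · exact absurd rfl hj
    · simp
  -- embedding of a univariate polynomial, for surjectivity
  have hΨ : ∀ u : Polynomial ℝ, ∃ p : R2, p.degreeOf 0 ≤ u.natDegree ∧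
      p.degreeOf 1 = 0 ∧ ∀ t, MvPolynomial.eval (param A B t) p = u.eval t := by
    intro u
    refine ⟨Polynomial.eval₂ MvPolynomial.C (MvPolynomial.X 0) (u.comp h), ?_, ?_, ?_⟩
    · refine (degreeOf_polyEval₂_le _ _ 0 1 (by simp [MvPolynomial.degreeOf_X])).trans ?_
      rw [mul_one]
      exact (Polynomial.natDegree_comp_le).trans (by
        calc u.natDegree * h.natDegree ≤ u.natDegree * 1 := Nat.mul_le_mul_left _ hh
        _ = u.natDegree := mul_one _)
    · refine Nat.le_zero.mp ?_
      refine (degreeOf_polyEval₂_le _ _ 1 0 (by simp [MvPolynomial.degreeOf_X])).trans ?_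
      simp
    · intro t
      rw [mvEval_polyEval₂]
      have hv : MvPolynomial.eval (param A B t) (MvPolynomial.X 0 : R2) = g.eval t := by
        rw [hparam]; simp
      rw [hv, Polynomial.eval_comp, hinv]
  constructor
  · ext f
    simp only [Set.mem_setOf_eq]
    constructor
    · rintro ⟨p, ⟨hp0, hp1⟩, rfl⟩
      refine ⟨_, (hΦdeg p).trans hp0, ?_⟩
      funext t
      rw [hΦeval]
    · rintro ⟨u, hu, rfl⟩
      obtain ⟨p, hp0, hp1, hp⟩ := hΨ u
      exact ⟨p, ⟨hp0.trans hu, hp1 ▸ Nat.zero_le _⟩, funext fun t => (hp t).symm⟩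
  · ext f
    simp only [Set.mem_setOf_eq]
    constructor
    · rintro ⟨v, ⟨⟨q, w, ⟨hq0, hq1⟩, hw0, hw1, hv1⟩, _⟩, rfl⟩
      have hd : v.1.degreeOf 0 ≤ k := by
        rw [hv1]
        refine (MvPolynomial.degreeOf_add_le _ _ _).trans (max_le hq0 ?_)
        refine (MvPolynomial.degreeOf_mul_le _ _ _).trans ?_
        have : (MvPolynomial.X 1 ^ (k+1) : R2).degreeOf 0 = 0 := by
          refine Nat.le_zero.mp ((MvPolynomial.degreeOf_pow_le _ _ _).trans ?_)
          simp [MvPolynomial.degreeOf_X]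
        simpa [this] using hw0
      refine ⟨Polynomial.C s * MvPolynomial.eval₂ Polynomial.C ![g, Polynomial.C a] v.1,
        ?_, ?_⟩
      · exact (Polynomial.natDegree_C_mul_le _ _).trans ((hΦdeg v.1).trans hd)
      · funext t
        rw [htan]
        simp only [Polynomial.eval_mul, Polynomial.eval_C, hΦeval]
        ring
    · rintro ⟨u, hu, rfl⟩
      obtain ⟨p, hp0, hp1, hp⟩ := hΨ u
      refine ⟨(MvPolynomial.C s * p, 0), ⟨⟨MvPolynomial.C s * p, 0, ⟨?_, ?_⟩, by simp, by simp,
        by ring⟩, ⟨0, 0, ⟨by simp, by simp⟩, by simp, by simp, by ring⟩⟩, ?_⟩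
      · exact (MvPolynomial.degreeOf_mul_le _ _ _).trans
          (by simpa using (hp0.trans hu))
      · exact (MvPolynomial.degreeOf_mul_le _ _ _).trans (by simp [hp1])
      · funext t
        rw [htan]
        simp only [map_mul, MvPolynomial.eval_C, map_zero, zero_mul, add_zero, hp]
        rw [mul_comm s, mul_assoc, hs, mul_one]

lemma master_v (k : ℕ) (A B : ℝ × ℝ) (a s : ℝ) (g h : Polynomial ℝ)
    (hg : g.natDegree ≤ 1) (hh : h.natDegree ≤ 1)
    (hinv : ∀ t : ℝ, h.eval (g.eval t) = t)
    (hs : s * s = 1)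
    (hparam : ∀ t, param A B t = ![a, g.eval t])
    (htan : tangent A B = (0, s)) :
    ({f : ℝ → ℝ | ∃ p : R2, memQ2 (k + 1) p ∧
        f = fun t => eval (param A B t) p} =
      {f : ℝ → ℝ | ∃ u : Polynomial ℝ, u.natDegree ≤ k + 1 ∧
        f = fun t => u.eval t}) ∧
    ({f : ℝ → ℝ | ∃ v : R2 × R2, memRT2 k v ∧
        f = fun t => eval (param A B t) v.1 * (tangent A B).1
          + eval (param A B t) v.2 * (tangent A B).2} =
      {f : ℝ → ℝ | ∃ u : Polynomial ℝ, u.natDegree ≤ k ∧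
        f = fun t => u.eval t}) := by
  have hgvec : ∀ t : ℝ, (fun j : Fin 2 => (![Polynomial.C a, g] j).eval t)
      = ![a, g.eval t] := by
    intro t; funext j; fin_cases j <;> simp
  have hΦeval : ∀ (p : R2) (t : ℝ),
      (MvPolynomial.eval₂ Polynomial.C ![Polynomial.C a, g] p).eval t
        = MvPolynomial.eval (param A B t) p := by
    intro p t
    rw [polyEval_mvEval₂, hparam, hgvec]
  have hΦdeg : ∀ (p : R2),
      (MvPolynomial.eval₂ Polynomial.C ![Polynomial.C a, g] p).natDegree
        ≤ p.degreeOf 1 := by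
    intro p
    refine natDegree_mvEval₂_le p _ 1 (by simpa using hg) fun j hj => ?_
    fin_cases j
    · simp
    · exact absurd rfl hj
  have hΨ : ∀ u : Polynomial ℝ, ∃ p : R2, p.degreeOf 1 ≤ u.natDegree ∧
      p.degreeOf 0 = 0 ∧ ∀ t, MvPolynomial.eval (param A B t) p = u.eval t := by
    intro u
    refine ⟨Polynomial.eval₂ MvPolynomial.C (MvPolynomial.X 1) (u.comp h), ?_, ?_, ?_⟩
    · refine (degreeOf_polyEval₂_le _ _ 1 1 (by simp [MvPolynomial.degreeOf_X])).trans ?_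
      rw [mul_one]
      exact (Polynomial.natDegree_comp_le).trans (by
        calc u.natDegree * h.natDegree ≤ u.natDegree * 1 := Nat.mul_le_mul_left _ hh
        _ = u.natDegree := mul_one _)
    · refine Nat.le_zero.mp ?_
      refine (degreeOf_polyEval₂_le _ _ 0 0 (by simp [MvPolynomial.degreeOf_X])).trans ?_
      simp
    · intro t
      rw [mvEval_polyEval₂]
      have hv : MvPolynomial.eval (param A B t) (MvPolynomial.X 1 : R2) = g.eval t := by
        rw [hparam]; simp
      rw [hv, Polynomial.eval_comp, hinv]
  constructor
  · ext f
    simp only [Set.mem_setOf_eq]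
    constructor
    · rintro ⟨p, ⟨hp0, hp1⟩, rfl⟩
      refine ⟨_, (hΦdeg p).trans hp1, ?_⟩
      funext t
      rw [hΦeval]
    · rintro ⟨u, hu, rfl⟩
      obtain ⟨p, hp1, hp0, hp⟩ := hΨ u
      exact ⟨p, ⟨hp0 ▸ Nat.zero_le _, hp1.trans hu⟩, funext fun t => (hp t).symm⟩
  · ext f
    simp only [Set.mem_setOf_eq]
    constructor
    · rintro ⟨v, ⟨_, ⟨q, w, ⟨hq0, hq1⟩, hw1, hw0, hv2⟩⟩, rfl⟩
      have hd : v.2.degreeOf 1 ≤ k := by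
        rw [hv2]
        refine (MvPolynomial.degreeOf_add_le _ _ _).trans (max_le hq1 ?_)
        refine (MvPolynomial.degreeOf_mul_le _ _ _).trans ?_
        have : (MvPolynomial.X 0 ^ (k+1) : R2).degreeOf 1 = 0 := by
          refine Nat.le_zero.mp ((MvPolynomial.degreeOf_pow_le _ _ _).trans ?_)
          simp [MvPolynomial.degreeOf_X]
        simpa [this] using hw1
      refine ⟨Polynomial.C s * MvPolynomial.eval₂ Polynomial.C ![Polynomial.C a, g] v.2,
        ?_, ?_⟩
      · exact (Polynomial.natDegree_C_mul_le _ _).trans ((hΦdeg v.2).trans hd)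
      · funext t
        rw [htan]
        simp only [Polynomial.eval_mul, Polynomial.eval_C, hΦeval]
        ring
    · rintro ⟨u, hu, rfl⟩
      obtain ⟨p, hp1, hp0, hp⟩ := hΨ u
      refine ⟨(0, MvPolynomial.C s * p), ⟨⟨0, 0, ⟨by simp, by simp⟩, by simp, by simp,
        by ring⟩, ⟨MvPolynomial.C s * p, 0, ⟨?_, ?_⟩, by simp, by simp, by ring⟩⟩, ?_⟩
      · exact (MvPolynomial.degreeOf_mul_le _ _ _).trans (by simp [hp0])
      · exact (MvPolynomial.degreeOf_mul_le _ _ _).trans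
          (by simpa using (hp1.trans hu))
      · funext t
        rw [htan]
        simp only [map_mul, MvPolynomial.eval_C, map_zero, zero_mul, zero_add, hp]
        rw [mul_comm s, mul_assoc, hs, mul_one]

lemma hone : (1 - Polynomial.X : Polynomial ℝ).natDegree ≤ 1 := by
  refine (Polynomial.natDegree_sub_le _ _).trans ?_
  simp


/-- On every edge `e` of the unit square `(0,1)²` (with endpoints `A`, `B`),
the trace space of `𝒬_{k+1}` is the space of univariate polynomials of degree
at most `k+1` in the parameter, and the tangential trace space of the
Raviart–Thomas-type space `E` is the space of univariate polynomials of degree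
at most `k` in the parameter. -/
theorem stmt_19 (k : ℕ) (A B : ℝ × ℝ)
    (hAB : (A, B) ∈ squareEdges ∨ (B, A) ∈ squareEdges) :
    ({f : ℝ → ℝ | ∃ p : R2, memQ2 (k + 1) p ∧
        f = fun t => eval (param A B t) p} =
      {f : ℝ → ℝ | ∃ u : Polynomial ℝ, u.natDegree ≤ k + 1 ∧
        f = fun t => u.eval t}) ∧
    ({f : ℝ → ℝ | ∃ v : R2 × R2, memRT2 k v ∧
        f = fun t => eval (param A B t) v.1 * (tangent A B).1
          + eval (param A B t) v.2 * (tangent A B).2} =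
      {f : ℝ → ℝ | ∃ u : Polynomial ℝ, u.natDegree ≤ k ∧
        f = fun t => u.eval t}) := by
  simp only [squareEdges, Set.mem_insert_iff, Set.mem_singleton_iff, Prod.mk.injEq] at hAB
  rcases hAB with (⟨rfl, rfl⟩ | ⟨rfl, rfl⟩ | ⟨rfl, rfl⟩ | ⟨rfl, rfl⟩) |
    (⟨rfl, rfl⟩ | ⟨rfl, rfl⟩ | ⟨rfl, rfl⟩ | ⟨rfl, rfl⟩)
  · exact master_h k _ _ 0 1 Polynomial.X Polynomial.X (by simp) (by simp) (by simp)
      (by norm_num)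
      (by intro t; funext j; fin_cases j <;> simp [param] <;> ring)
      (by norm_num [tangent, Prod.ext_iff])
  · exact master_v k _ _ 1 1 Polynomial.X Polynomial.X (by simp) (by simp) (by simp)
      (by norm_num)
      (by intro t; funext j; fin_cases j <;> simp [param] <;> ring)
      (by norm_num [tangent, Prod.ext_iff])
  · exact master_h k _ _ 1 (-1) (1 - Polynomial.X) (1 - Polynomial.X) hone hone
      (by intro t; simp) (by norm_num)
      (by intro t; funext j; fin_cases j <;> simp [param] <;> ring)
      (by norm_num [tangent, Prod.ext_iff])
  · exact master_v k _ _ 0 (-1) (1 - Polynomial.X) (1 - Polynomial.X) hone hone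
      (by intro t; simp) (by norm_num)
      (by intro t; funext j; fin_cases j <;> simp [param] <;> ring)
      (by norm_num [tangent, Prod.ext_iff])
  · exact master_h k _ _ 0 (-1) (1 - Polynomial.X) (1 - Polynomial.X) hone hone
      (by intro t; simp) (by norm_num)
      (by intro t; funext j; fin_cases j <;> simp [param] <;> ring)
      (by norm_num [tangent, Prod.ext_iff])
  · exact master_v k _ _ 1 (-1) (1 - Polynomial.X) (1 - Polynomial.X) hone hone
      (by intro t; simp) (by norm_num)
      (by intro t; funext j; fin_cases j <;> simp [param] <;> ring)
      (by norm_num [tangent, Prod.ext_iff])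
  · exact master_h k _ _ 1 1 Polynomial.X Polynomial.X (by simp) (by simp) (by simp)
      (by norm_num)
      (by intro t; funext j; fin_cases j <;> simp [param] <;> ring)
      (by norm_num [tangent, Prod.ext_iff])
  · exact master_v k _ _ 0 1 Polynomial.X Polynomial.X (by simp) (by simp) (by simp)
      (by norm_num)
      (by intro t; funext j; fin_cases j <;> simp [param] <;> ring)
      (by norm_num [tangent, Prod.ext_iff])
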